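/- Let μ₁, μ₂ ∈ ℝ and σ₁, σ₂ > 0, and for j, k ∈ ℤ define μ(j,k) = ((μ₁ + 2πj) σ₂² + (μ₂ + 2πk) σ₁²)/(σ₁² + σ₂²), σ̄ = √(σ₁² σ₂² / (σ₁² + σ₂²)), and w(j,k) = exp(−((μ₁ + 2πj) − (μ₂ + 2πk))² / (2(σ₁² + σ₂²))) / √(2π(σ₁² + σ₂²)). Then the normalization constant of the product of the two wrapped normal densities satisfies ∫_0^{2π} f_WN(x; μ₁, σ₁) · f_WN(x; μ₂, σ₂) dx = ∑_{j,k ∈ ℤ} w(j,k) ∫_0^{2π} N(x; μ(j,k), σ̄) dx. -/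

import Mathlib

open MeasureTheory

/-- Wrapped normal density with location `μ` and concentration `σ`. -/
noncomputable def wnDensity (μ σ x : ℝ) : ℝ :=
  (1 / (Real.sqrt (2 * Real.pi) * σ)) *
    ∑' k : ℤ, Real.exp (-(x - μ + 2 * Real.pi * (k : ℝ)) ^ 2 / (2 * σ ^ 2))

/-- One-dimensional Gaussian density with mean `μ` and standard deviation `σ`. -/
noncomputable def gaussDensity (μ σ x : ℝ) : ℝ :=
  (1 / (Real.sqrt (2 * Real.pi) * σ)) * Real.exp (-(x - μ) ^ 2 / (2 * σ ^ 2))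


/-!
Expanding each wrapped normal as the lattice sum `∑ⱼ N(x; μ + 2πj, σ)`, the integrand becomes the
double series `∑_{j,k} N(x; μ₁ + 2πj, σ₁) N(x; μ₂ + 2πk, σ₂)`. On a bounded interval the `j`-th
Gaussian is at most `C r^|j|` with `r = exp(-2π²/(2σ²)) < 1`, so the double series is dominated by a
product of geometric series and may be integrated term by term. Completing the square turns each
product of two Gaussians into `w(j,k) N(x; μ(j,k), σ̄)`.
-/

open Real Set
open scoped Interval

lemma summable_pow_natAbs {r : ℝ} (h₀ : 0 ≤ r) (h₁ : r < 1) :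
    Summable fun j : ℤ => r ^ j.natAbs :=
  .of_nat_of_neg (by simpa using summable_geometric_of_lt_one h₀ h₁)
    (by simpa using summable_geometric_of_lt_one h₀ h₁)

/-- From `(t + a)² + t² ≥ a² / 2` and `j² ≥ |j|` on `ℤ`. -/
lemma exp_neg_sq_add_two_pi_mul_le {c : ℝ} (hc : 0 < c) (t : ℝ) (j : ℤ) :
    exp (-(t + 2 * π * j) ^ 2 / c) ≤ exp (t ^ 2 / c) * exp (-(2 * π ^ 2) / c) ^ j.natAbs := by
  have hj : (j.natAbs : ℝ) ≤ (j : ℝ) ^ 2 := by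
    simpa using (Int.cast_le (R := ℝ)).2 (Int.natAbs_le_self_sq j)
  have hnum : -(t + 2 * π * j) ^ 2 ≤ t ^ 2 - 2 * π ^ 2 * j.natAbs := by
    nlinarith [sq_nonneg (2 * t + 2 * π * j), mul_nonneg (sq_nonneg π) (sub_nonneg.2 hj)]
  rw [← exp_nat_mul, ← exp_add, exp_le_exp,
    show t ^ 2 / c + j.natAbs * (-(2 * π ^ 2) / c) = (t ^ 2 - 2 * π ^ 2 * j.natAbs) / c by ring]
  exact div_le_div_of_nonneg_right hnum hc.le

lemma continuous_gaussDensity (μ σ : ℝ) : Continuous (gaussDensity μ σ) := by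
  unfold gaussDensity; fun_prop

lemma wnDensity_eq_tsum_gaussDensity (μ σ x : ℝ) :
    wnDensity μ σ x = ∑' j : ℤ, gaussDensity (μ + 2 * π * j) σ x := by
  rw [wnDensity, ← (Equiv.neg ℤ).tsum_eq, ← tsum_mul_left]
  refine tsum_congr fun j => ?_
  simp only [gaussDensity, Equiv.neg_apply, Int.cast_neg]
  ring_nf

section Gaussian

variable {σ : ℝ}

lemma gaussDensity_nonneg (hσ : 0 ≤ σ) (μ x : ℝ) : 0 ≤ gaussDensity μ σ x := by
  unfold gaussDensity; positivity

lemma gaussDensity_add_two_pi_mul_le (hσ : 0 < σ) {μ x R : ℝ} (hx : |x - μ| ≤ R) (j : ℤ) :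
    gaussDensity (μ + 2 * π * j) σ x ≤
      1 / (√(2 * π) * σ) *
        (exp (R ^ 2 / (2 * σ ^ 2)) * exp (-(2 * π ^ 2) / (2 * σ ^ 2)) ^ j.natAbs) := by
  have key := exp_neg_sq_add_two_pi_mul_le (by positivity : 0 < 2 * σ ^ 2) (x - μ) (-j)
  rw [Int.natAbs_neg] at key
  have hR : (x - μ) ^ 2 ≤ R ^ 2 := sq_le_sq' (abs_le.1 hx).1 (abs_le.1 hx).2
  rw [gaussDensity]
  gcongr
  calc exp (-(x - (μ + 2 * π * j)) ^ 2 / (2 * σ ^ 2))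
      = exp (-(x - μ + 2 * π * (-j : ℤ)) ^ 2 / (2 * σ ^ 2)) := by push_cast; ring_nf
    _ ≤ _ := key
    _ ≤ _ := by gcongr

lemma exists_summable_bound_gaussDensity_shift (hσ : 0 < σ) (μ R : ℝ) :
    ∃ u : ℤ → ℝ, 0 ≤ u ∧ Summable u ∧
      ∀ (j : ℤ) (x : ℝ), |x - μ| ≤ R → gaussDensity (μ + 2 * π * j) σ x ≤ u j := by
  have hr : exp (-(2 * π ^ 2) / (2 * σ ^ 2)) < 1 :=
    exp_lt_one_iff.2 (div_neg_of_neg_of_pos (by nlinarith [pi_pos]) (by positivity))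
  exact ⟨_, fun j => by positivity, ((summable_pow_natAbs (exp_pos _).le hr).mul_left _).mul_left _,
    fun j x hx => gaussDensity_add_two_pi_mul_le hσ hx j⟩

lemma summable_gaussDensity_shift (hσ : 0 < σ) (μ x : ℝ) :
    Summable fun j : ℤ => gaussDensity (μ + 2 * π * j) σ x := by
  obtain ⟨u, -, hu, hle⟩ := exists_summable_bound_gaussDensity_shift hσ μ |x - μ|
  exact hu.of_nonneg_of_le (fun j => gaussDensity_nonneg hσ.le _ _) (fun j => hle j x le_rfl)

lemma hasSum_gaussDensity_shift (hσ : 0 < σ) (μ x : ℝ) :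
    HasSum (fun j : ℤ => gaussDensity (μ + 2 * π * j) σ x) (wnDensity μ σ x) := by
  rw [wnDensity_eq_tsum_gaussDensity]
  exact (summable_gaussDensity_shift hσ μ x).hasSum

end Gaussian

section Product

variable {σ₁ σ₂ : ℝ}

/-- Completing the square in `x`. -/
lemma gaussDensity_mul_gaussDensity (hσ₁ : 0 < σ₁) (hσ₂ : 0 < σ₂) (a b x : ℝ) :
    gaussDensity a σ₁ x * gaussDensity b σ₂ x =
      exp (-(a - b) ^ 2 / (2 * (σ₁ ^ 2 + σ₂ ^ 2))) / √(2 * π * (σ₁ ^ 2 + σ₂ ^ 2)) *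
        gaussDensity ((a * σ₂ ^ 2 + b * σ₁ ^ 2) / (σ₁ ^ 2 + σ₂ ^ 2))
          √(σ₁ ^ 2 * σ₂ ^ 2 / (σ₁ ^ 2 + σ₂ ^ 2)) x := by
  set s := σ₁ ^ 2 + σ₂ ^ 2
  have hs : 0 < s := by positivity
  have hτ : √s * √(σ₁ ^ 2 * σ₂ ^ 2 / s) = σ₁ * σ₂ := by
    rw [← sqrt_mul hs.le, mul_div_cancel₀ _ hs.ne', ← mul_pow, sqrt_sq (by positivity)]
  have hτ_sq : √(σ₁ ^ 2 * σ₂ ^ 2 / s) ^ 2 = σ₁ ^ 2 * σ₂ ^ 2 / s := sq_sqrt (by positivity)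
  have hexp : -(x - a) ^ 2 / (2 * σ₁ ^ 2) + -(x - b) ^ 2 / (2 * σ₂ ^ 2) =
      -(a - b) ^ 2 / (2 * s) +
        -(x - (a * σ₂ ^ 2 + b * σ₁ ^ 2) / s) ^ 2 / (2 * √(σ₁ ^ 2 * σ₂ ^ 2 / s) ^ 2) := by
    rw [hτ_sq]; field_simp; ring
  simp only [gaussDensity]
  rw [sqrt_mul (by positivity) s]
  calc 1 / (√(2 * π) * σ₁) * exp (-(x - a) ^ 2 / (2 * σ₁ ^ 2)) *
        (1 / (√(2 * π) * σ₂) * exp (-(x - b) ^ 2 / (2 * σ₂ ^ 2)))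
      = 1 / (√(2 * π) * √(2 * π) * (√s * √(σ₁ ^ 2 * σ₂ ^ 2 / s))) *
          exp (-(x - a) ^ 2 / (2 * σ₁ ^ 2) + -(x - b) ^ 2 / (2 * σ₂ ^ 2)) := by
        rw [hτ, exp_add]; field_simp
    _ = _ := by rw [hexp, exp_add]; field_simp

lemma hasSum_intervalIntegral_gaussDensity_shift_mul (hσ₁ : 0 < σ₁) (hσ₂ : 0 < σ₂)
    (μ₁ μ₂ a b : ℝ) :
    HasSum (fun p : ℤ × ℤ => ∫ x in a..b,
        gaussDensity (μ₁ + 2 * π * p.1) σ₁ x * gaussDensity (μ₂ + 2 * π * p.2) σ₂ x)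
      (∫ x in a..b, wnDensity μ₁ σ₁ x * wnDensity μ₂ σ₂ x) := by
  have hmem : ∀ {x : ℝ} (μ : ℝ), x ∈ Ι a b → |x - μ| ≤ |b - a| + |a - μ| := fun μ hx =>
    (abs_sub_le _ a μ).trans (add_le_add_left (abs_sub_left_of_mem_uIcc (uIoc_subset_uIcc hx)) _)
  obtain ⟨u₁, hu₁_nonneg, hu₁, hle₁⟩ :=
    exists_summable_bound_gaussDensity_shift hσ₁ μ₁ (|b - a| + |a - μ₁|)
  obtain ⟨u₂, hu₂_nonneg, hu₂, hle₂⟩ :=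
    exists_summable_bound_gaussDensity_shift hσ₂ μ₂ (|b - a| + |a - μ₂|)
  refine intervalIntegral.hasSum_integral_of_dominated_convergence (fun p _ => u₁ p.1 * u₂ p.2)
    (fun p => ((continuous_gaussDensity _ _).mul (continuous_gaussDensity _ _)).aestronglyMeasurable)
    (fun p => ae_of_all _ fun x hx => ?_)
    (ae_of_all _ fun _ _ => hu₁.mul_of_nonneg hu₂ hu₁_nonneg hu₂_nonneg)
    intervalIntegrable_const
    (ae_of_all _ fun x _ => (hasSum_gaussDensity_shift hσ₁ μ₁ x).mul
      (hasSum_gaussDensity_shift hσ₂ μ₂ x)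
      ((summable_gaussDensity_shift hσ₁ μ₁ x).mul_of_nonneg (summable_gaussDensity_shift hσ₂ μ₂ x)
        (fun _ => gaussDensity_nonneg hσ₁.le _ _) (fun _ => gaussDensity_nonneg hσ₂.le _ _)))
  rw [norm_of_nonneg (mul_nonneg (gaussDensity_nonneg hσ₁.le _ _) (gaussDensity_nonneg hσ₂.le _ _))]
  exact mul_le_mul (hle₁ _ _ (hmem μ₁ hx)) (hle₂ _ _ (hmem μ₂ hx))
    (gaussDensity_nonneg hσ₂.le _ _) (hu₁_nonneg _)

end Product

/-- Normalization constant of the product of two wrapped normal densities. -/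
theorem wn_product_normalization (μ₁ μ₂ σ₁ σ₂ : ℝ) (hσ₁ : 0 < σ₁) (hσ₂ : 0 < σ₂)
    (μjk : ℤ → ℤ → ℝ) (σbar : ℝ) (w : ℤ → ℤ → ℝ)
    (hμjk : ∀ j k : ℤ, μjk j k =
      ((μ₁ + 2 * Real.pi * (j : ℝ)) * σ₂ ^ 2 + (μ₂ + 2 * Real.pi * (k : ℝ)) * σ₁ ^ 2) /
        (σ₁ ^ 2 + σ₂ ^ 2))
    (hσbar : σbar = Real.sqrt (σ₁ ^ 2 * σ₂ ^ 2 / (σ₁ ^ 2 + σ₂ ^ 2)))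
    (hw : ∀ j k : ℤ, w j k =
      Real.exp (-((μ₁ + 2 * Real.pi * (j : ℝ)) - (μ₂ + 2 * Real.pi * (k : ℝ))) ^ 2 /
          (2 * (σ₁ ^ 2 + σ₂ ^ 2))) / Real.sqrt (2 * Real.pi * (σ₁ ^ 2 + σ₂ ^ 2))) :
    ∫ x in (0 : ℝ)..(2 * Real.pi), wnDensity μ₁ σ₁ x * wnDensity μ₂ σ₂ x =
      ∑' p : ℤ × ℤ, w p.1 p.2 *
        ∫ x in (0 : ℝ)..(2 * Real.pi), gaussDensity (μjk p.1 p.2) σbar x := by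
  rw [← (hasSum_intervalIntegral_gaussDensity_shift_mul hσ₁ hσ₂ μ₁ μ₂ 0 (2 * π)).tsum_eq]
  refine tsum_congr fun p => ?_
  rw [← intervalIntegral.integral_const_mul]
  refine intervalIntegral.integral_congr fun x _ => ?_
  rw [hw, hμjk, hσbar, gaussDensity_mul_gaussDensity hσ₁ hσ₂]
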